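/- Let N = n₁⋯n_p with all nᵢ ≥ 1 and suppose N·(1 − 2p + Σ_{i=1}^{p} 2nᵢ) < N² (as integers). Then the set of matrices A : Matrix I I ℂ that can be written as a convex combination of at most rank(A) pure product states has (N²−1)-dimensional Hausdorff measure zero. In words: the optimal pure state ensemble length of a randomly picked separable state is with probability 1 strictly greater than the state's rank, so almost every separable state requires entangled pure states in its spectral decomposition. -/

import Mathlib

open scoped ComplexOrder NNReal
open MeasureTheory

/-- A density matrix: positive semidefinite (hence Hermitian) with trace 1. -/
def IsDensityMatrix {m : Type*} [Fintype m] [DecidableEq m] (A : Matrix m m ℂ) : Prop :=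
  A.PosSemidef ∧ A.trace = 1

/-- A pure density matrix: a density matrix of rank one. -/
def IsPureDensityMatrix {m : Type*} [Fintype m] [DecidableEq m] (A : Matrix m m ℂ) : Prop :=
  IsDensityMatrix A ∧ A.rank = 1

/-- Tensor (Kronecker) product of the matrices `B i` over all `p` particles. -/
def prodMat {p : ℕ} (n : Fin p → ℕ) (B : ∀ i, Matrix (Fin (n i)) (Fin (n i)) ℂ) :
    Matrix (∀ i, Fin (n i)) (∀ i, Fin (n i)) ℂ :=
  fun x y => ∏ i, B i (x i) (y i)

/-- `Σ^k(n₁,…,n_p)`: separable states of ensemble length at most `k`. -/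
def SigmaK {p : ℕ} (n : Fin p → ℕ) (k : ℕ) :
    Set (Matrix (∀ i, Fin (n i)) (∀ i, Fin (n i)) ℂ) :=
  {A | ∃ (l : Fin k → ℝ) (B : Fin k → ∀ i, Matrix (Fin (n i)) (Fin (n i)) ℂ),
    (∀ j, 0 ≤ l j) ∧ (∑ j, l j) = 1 ∧ (∀ j i, IsDensityMatrix (B j i)) ∧
    A = ∑ j, l j • prodMat n (B j)}

/-- `Σ_pure^k(n₁,…,n_p)`: separable states of pure-state ensemble length at most `k`. -/
def SigmaPureK {p : ℕ} (n : Fin p → ℕ) (k : ℕ) :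
    Set (Matrix (∀ i, Fin (n i)) (∀ i, Fin (n i)) ℂ) :=
  {A | ∃ (l : Fin k → ℝ) (B : Fin k → ∀ i, Matrix (Fin (n i)) (Fin (n i)) ℂ),
    (∀ j, 0 ≤ l j) ∧ (∑ j, l j) = 1 ∧ (∀ j i, IsPureDensityMatrix (B j i)) ∧
    A = ∑ j, l j • prodMat n (B j)}

noncomputable instance {m : Type*} [Fintype m] : NormedAddCommGroup (Matrix m m ℂ) :=
  Matrix.normedAddCommGroup

noncomputable instance {m : Type*} [Fintype m] : MeasurableSpace (Matrix m m ℂ) := borel _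

instance {m : Type*} [Fintype m] :
    @BorelSpace (Matrix m m ℂ) PseudoMetricSpace.toUniformSpace.toTopologicalSpace _ := ⟨rfl⟩

noncomputable instance {m : Type*} [Fintype m] : NormedSpace ℝ (Matrix m m ℂ) :=
  Matrix.normedSpace

namespace RLMZ

noncomputable def entv {m : Type*} [Fintype m] (w : m → ℂ) (x y : m) : ℂ :=
  w x * (starRingEnd ℂ) (w y) / ∑ k, w k * (starRingEnd ℂ) (w k)

/-- reconstruction of a pure density matrix from one of its columns -/
lemma pure_recon {m : Type*} [Fintype m] [DecidableEq m] {B : Matrix m m ℂ}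
    (hpsd : B.PosSemidef) (htr : B.trace = 1) (hrk : B.rank = 1) :
    ∃ c, B c c ≠ 0 ∧ ∀ x y, entv (fun k => B k c / B c c) x y = B x y := by
  have herm := hpsd.1
  have happ : ∀ a b, (starRingEnd ℂ) (B a b) = B b a := by
    intro a b
    have := congrFun (congrFun herm b) a
    simpa [Matrix.conjTranspose_apply] using this
  have htr' : ∑ k, B k k = 1 := by simpa [Matrix.trace, Matrix.diag] using htr
  have hc : ∃ c, B c c ≠ 0 := by
    by_contra h
    push_neg at h
    rw [Finset.sum_congr rfl (fun k _ => h k)] at htr'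
    simp at htr'
  obtain ⟨c, hc⟩ := hc
  have hminor : ∀ x y, B x y * B c c = B x c * B c y := by
    rw [Matrix.rank] at hrk
    rw [finrank_eq_one_iff'] at hrk
    obtain ⟨v, -, hv⟩ := hrk
    have hcol : ∀ t : m, ∃ a : ℂ, ∀ k, B k t = a * (v : m → ℂ) k := by
      intro t
      have hmem : (fun k => B k t) ∈ LinearMap.range B.mulVecLin := by
        refine ⟨Pi.single t 1, ?_⟩
        ext k
        simp [Matrix.mulVecLin_apply]
      obtain ⟨a, ha⟩ := hv ⟨_, hmem⟩
      exact ⟨a, fun k => by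
        have := congrFun (congrArg Subtype.val ha) k
        simpa using this.symm⟩
    intro x y
    obtain ⟨a, ha⟩ := hcol y
    obtain ⟨b, hb⟩ := hcol c
    rw [ha, hb, ha, hb]
    ring
  refine ⟨c, hc, ?_⟩
  intro x y
  have hct : (starRingEnd ℂ) (B c c) = B c c := happ c c
  have hsum : ∑ k, (B k c / B c c) * (starRingEnd ℂ) (B k c / B c c) = 1 / B c c := by
    have hterm : ∀ k, (B k c / B c c) * (starRingEnd ℂ) (B k c / B c c) = B k k / B c c := by
      intro k
      rw [map_div₀, happ, hct, div_mul_div_comm, ← hminor k k]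
      rw [mul_comm (B c c) (B c c)]
      exact mul_div_mul_right _ _ hc
    rw [Finset.sum_congr rfl (fun k _ => hterm k), ← Finset.sum_div, htr']
  rw [entv, hsum, map_div₀, happ, hct]
  field_simp
  ring_nf
  linear_combination (-1 : ℂ) * hminor x y


variable {p : ℕ} (n : Fin p → ℕ)

abbrev Par (r : ℕ) (c : Fin (r+1) → ∀ i, Fin (n i)) : Type _ :=
  (Fin r → ℝ) × (∀ j : Fin (r+1), ∀ i : Fin p, ({k : Fin (n i) // k ≠ c j i} → ℂ))

noncomputable def Wf (r : ℕ) (c : Fin (r+1) → ∀ i, Fin (n i)) (q : Par n r c)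
    (j : Fin (r+1)) (i : Fin p) : Fin (n i) → ℂ :=
  fun k => if h : k = c j i then 1 else q.2 j i ⟨k, h⟩

noncomputable def wt (r : ℕ) (q : Fin r → ℝ) (j : Fin (r+1)) : ℝ :=
  if h : (j : ℕ) < r then q ⟨j, h⟩ else 1 - ∑ j', q j'

noncomputable def Gmap (r : ℕ) (c : Fin (r+1) → ∀ i, Fin (n i)) (q : Par n r c) :
    Matrix (∀ i, Fin (n i)) (∀ i, Fin (n i)) ℂ :=
  fun x y => ∑ j, (wt r q.1 j : ℂ) * ∏ i, entv (Wf n r c q j i) (x i) (y i)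

lemma den_ne_zero {m : Type*} [Fintype m] (w : m → ℂ) (c : m) (hw : w c = 1) :
    (∑ k, w k * (starRingEnd ℂ) (w k)) ≠ 0 := by
  intro h0
  have hre : (0:ℝ) < (∑ k, w k * (starRingEnd ℂ) (w k)).re := by
    rw [Complex.re_sum]
    refine Finset.sum_pos' (fun k _ => ?_) ⟨c, Finset.mem_univ c, ?_⟩
    · rw [Complex.mul_conj]
      simpa using Complex.normSq_nonneg (w k)
    · rw [hw]; norm_num
  rw [h0] at hre
  simp at hre

lemma Wf_c (r : ℕ) (c : Fin (r+1) → ∀ i, Fin (n i)) (q : Par n r c)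
    (j : Fin (r+1)) (i : Fin p) : Wf n r c q j i (c j i) = 1 := by
  simp [Wf]

lemma contDiff_Wf (r : ℕ) (c : Fin (r+1) → ∀ i, Fin (n i)) (j : Fin (r+1)) (i : Fin p)
    (k : Fin (n i)) : ContDiff ℝ 1 (fun q : Par n r c => Wf n r c q j i k) := by
  by_cases h : k = c j i
  · have he : (fun q : Par n r c => Wf n r c q j i k) = fun _ => (1:ℂ) := by
      funext q; simp [Wf, h]
    rw [he]
    fun_prop
  · have he : (fun q : Par n r c => Wf n r c q j i k) = fun q => q.2 j i ⟨k, h⟩ := by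
      funext q; simp [Wf, h]
    rw [he]
    exact ((ContinuousLinearMap.proj ⟨k, h⟩ :
        ({k' : Fin (n i) // k' ≠ c j i} → ℂ) →L[ℝ] ℂ).comp
      ((ContinuousLinearMap.proj i :
          (∀ i' : Fin p, ({k' : Fin (n i') // k' ≠ c j i'} → ℂ)) →L[ℝ] _).comp
        ((ContinuousLinearMap.proj j :
            (∀ j' : Fin (r+1), ∀ i' : Fin p, ({k' : Fin (n i') // k' ≠ c j' i'} → ℂ)) →L[ℝ] _).comp
          (ContinuousLinearMap.snd ℝ (Fin r → ℝ) _)))).contDiff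

lemma contDiff_Gmap (r : ℕ) (c : Fin (r+1) → ∀ i, Fin (n i)) :
    ContDiff ℝ 1 (Gmap n r c) := by
  refine contDiff_pi.2 fun x => ?_
  refine contDiff_pi.2 fun y => ?_
  apply ContDiff.sum
  intro j _
  apply ContDiff.mul
  · -- weight
    apply Complex.ofRealCLM.contDiff.comp
    show ContDiff ℝ 1 fun q : Par n r c => wt r q.1 j
    by_cases h : (j : ℕ) < r
    · have he : (fun q : Par n r c => wt r q.1 j) = fun q => q.1 ⟨j, h⟩ := by
        funext q; simp [wt, h]
      rw [he]
      fun_prop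
    · have he : (fun q : Par n r c => wt r q.1 j) = fun q => 1 - ∑ j', q.1 j' := by
        funext q; simp [wt, h]
      rw [he]
      have : ContDiff ℝ 1 fun q : Par n r c => ∑ j', q.1 j' :=
        ContDiff.sum fun j' _ => by fun_prop
      exact contDiff_const.sub this
  · apply contDiff_prod
    intro i _
    unfold entv
    simp only [div_eq_mul_inv]
    refine ContDiff.mul (ContDiff.mul (contDiff_Wf n r c j i (x i)) ?_) ?_
    · exact Complex.conjCLE.contDiff.comp (contDiff_Wf n r c j i (y i))
    · refine ContDiff.inv (ContDiff.sum fun k _ => ContDiff.mul (contDiff_Wf n r c j i k)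
        (Complex.conjCLE.contDiff.comp (contDiff_Wf n r c j i k))) ?_
      intro q
      exact den_ne_zero _ (c j i) (Wf_c n r c q j i)

end RLMZ

namespace RLMZ2
open RLMZ Module

variable {p : ℕ} (n : Fin p → ℕ)

lemma finrank_Par (r : ℕ) (c : Fin (r+1) → ∀ i, Fin (n i)) :
    Module.finrank ℝ (Par n r c) = r + (r+1) * ∑ i, 2 * (n i - 1) := by
  rw [Module.finrank_prod, Module.finrank_fin_fun]
  congr 1
  rw [Module.finrank_pi_fintype ℝ]
  have hj : ∀ j : Fin (r+1),
      Module.finrank ℝ (∀ i, ({k' : Fin (n i) // k' ≠ c j i} → ℂ)) = ∑ i, 2 * (n i - 1) := by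
    intro j
    rw [Module.finrank_pi_fintype ℝ]
    refine Finset.sum_congr rfl fun i _ => ?_
    rw [Module.finrank_pi_fintype ℝ]
    have hcard : Fintype.card {k' : Fin (n i) // k' ≠ c j i} = n i - 1 := by
      simp [Fintype.card_subtype_compl]
    simp [Finset.sum_const, Finset.card_univ, hcard, Complex.finrank_real_complex, mul_comm]
  rw [Finset.sum_congr rfl fun j _ => hj j, Finset.sum_const, Finset.card_univ,
    Fintype.card_fin, smul_eq_mul]

lemma dim_lt (hn : ∀ i, 1 ≤ n i)
    (hN : ((∏ i, n i : ℕ) : ℤ) * (1 - 2 * (p : ℤ) + ∑ i, 2 * (n i : ℤ)) <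
      ((∏ i, n i : ℕ) : ℤ) ^ 2) (r : ℕ) (hr : r + 1 ≤ ∏ i, n i) :
    r + (r+1) * ∑ i, 2 * (n i - 1) < (∏ i, n i)^2 - 1 := by
  set Nn := ∏ i, n i with hNn
  have hN1 : 1 ≤ Nn := hr.trans' (by omega)
  have hN2 : 1 ≤ Nn^2 := Nat.one_le_pow _ _ (by omega)
  have hcast : ((∑ i, 2 * (n i - 1) : ℕ) : ℤ) = ∑ i, (2 * (n i : ℤ) - 2) := by
    rw [Nat.cast_sum]
    refine Finset.sum_congr rfl fun i _ => ?_
    have := hn i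
    omega
  have hS : (1 : ℤ) + ∑ i, (2 * (n i : ℤ) - 2) = 1 - 2 * (p : ℤ) + ∑ i, 2 * (n i : ℤ) := by
    rw [Finset.sum_sub_distrib, Finset.sum_const, Finset.card_univ, Fintype.card_fin]
    push_cast
    ring
  have hSnn : (0 : ℤ) ≤ ∑ i, (2 * (n i : ℤ) - 2) :=
    Finset.sum_nonneg fun i _ => by have := hn i; omega
  have key : ((r : ℤ) + 1) * (1 + ∑ i, (2 * (n i : ℤ) - 2)) ≤
      (Nn : ℤ) * (1 + ∑ i, (2 * (n i : ℤ) - 2)) := by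
    apply mul_le_mul_of_nonneg_right _ (by linarith)
    exact_mod_cast hr
  rw [hS] at key
  have hz : ((r + (r+1) * ∑ i, 2 * (n i - 1) : ℕ) : ℤ) < ((Nn^2 - 1 : ℕ) : ℤ) := by
    rw [Nat.cast_add, Nat.cast_mul, hcast, Nat.cast_sub hN2]
    push_cast
    nlinarith [hN, key]
  exact_mod_cast hz

end RLMZ2


namespace RLMZ3
open RLMZ RLMZ2 Module

variable {p : ℕ} (n : Fin p → ℕ)

lemma sum_mem_range (r : ℕ) (l : Fin (r+1) → ℝ)
    (B : Fin (r+1) → ∀ i, Matrix (Fin (n i)) (Fin (n i)) ℂ)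
    (hl1 : (∑ j, l j) = 1) (hp : ∀ j i, IsPureDensityMatrix (B j i)) :
    ∃ c, (∑ j, l j • prodMat n (B j)) ∈ Set.range (Gmap n r c) := by
  have hrec := fun (j : Fin (r+1)) (i : Fin p) =>
    pure_recon (hp j i).1.1 (hp j i).1.2 (hp j i).2
  choose c hc0 hcrec using hrec
  set q : Par n r c := (fun j' => l j'.castSucc,
      fun j i k => B j i k.1 (c j i) / B j i (c j i) (c j i)) with hq
  refine ⟨c, ⟨q, ?_⟩⟩
  have hW : ∀ j i, Wf n r c q j i =
      fun k => B j i k (c j i) / B j i (c j i) (c j i) := by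
    intro j i
    funext k
    by_cases hk : k = c j i
    · subst hk
      simp only [Wf, dif_pos rfl]
      exact (div_self (hc0 j i)).symm
    · simp [Wf, hk, hq]
  have hwt : ∀ j, wt r q.1 j = l j := by
    intro j
    by_cases h : (j : ℕ) < r
    · have hcs : Fin.castSucc (⟨(j : ℕ), h⟩ : Fin r) = j := by
        apply Fin.ext; rfl
      simp only [wt, dif_pos h, hq]
      rw [hcs]
    · have hj : j = Fin.last r := by
        apply Fin.ext
        have := j.2
        simp only [Fin.val_last]
        omega
      subst hj
      simp only [wt, dif_neg h, hq]
      have := Fin.sum_univ_castSucc (f := l)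
      rw [this] at hl1
      linarith
  funext x y
  show (∑ j, ((wt r q.1 j : ℝ) : ℂ) * ∏ i, entv (Wf n r c q j i) (x i) (y i)) = _
  rw [Matrix.sum_apply]
  refine Finset.sum_congr rfl fun j _ => ?_
  rw [hwt j]
  have hsm : (l j • prodMat n (B j)) x y = (l j : ℂ) * ∏ i, B j i (x i) (y i) := by
    simp [prodMat, Matrix.smul_apply, Complex.real_smul]
  rw [hsm]
  congr 1
  exact Finset.prod_congr rfl fun i _ => by rw [hW j i, hcrec j i (x i) (y i)]

end RLMZ3

open RLMZ RLMZ2 RLMZ3 in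
/-- if `N·(1 - 2p + Σ 2nᵢ) < N²` (as integers), `N = n₁⋯n_p`, then the set of
matrices expressible as a convex combination of at most `rank A` pure product states has
`(N²-1)`-dimensional Hausdorff measure zero: almost every separable state has optimal pure
state ensemble length greater than its rank. -/
theorem rank_length_measure_zero {p : ℕ} (n : Fin p → ℕ) (hn : ∀ i, 1 ≤ n i)
    (hN : ((∏ i, n i : ℕ) : ℤ) * (1 - 2 * (p : ℤ) + ∑ i, 2 * (n i : ℤ)) <
      ((∏ i, n i : ℕ) : ℤ) ^ 2) :
    μH[((∏ i, n i : ℕ) : ℝ) ^ 2 - 1]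
      {A : Matrix (∀ i, Fin (n i)) (∀ i, Fin (n i)) ℂ |
        ∃ (l : Fin A.rank → ℝ) (B : Fin A.rank → ∀ i, Matrix (Fin (n i)) (Fin (n i)) ℂ),
          (∀ j, 0 ≤ l j) ∧ (∑ j, l j) = 1 ∧ (∀ j i, IsPureDensityMatrix (B j i)) ∧
          A = ∑ j, l j • prodMat n (B j)} = 0 := by
  classical
  have hN1 : 1 ≤ ∏ i, n i := Finset.one_le_prod' fun i _ => hn i
  have hN2 : 1 ≤ (∏ i, n i)^2 := Nat.one_le_pow _ _ (by omega)
  have hexp : ((∏ i, n i : ℕ) : ℝ)^2 - 1 = ((((∏ i, n i)^2 - 1 : ℕ) : ℝ≥0) : ℝ) := by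
    rw [NNReal.coe_natCast, Nat.cast_sub hN2]
    push_cast
    ring
  rw [hexp]
  refine measure_mono_null
    (t := ⋃ (r : Fin (∏ i, n i)), ⋃ (c : Fin ((r:ℕ)+1) → ∀ i, Fin (n i)),
      Set.range (Gmap n (r:ℕ) c)) ?_ ?_
  · intro A hA
    obtain ⟨l, B, hl0, hl1, hp, hAeq⟩ := hA
    have hrank1 : 1 ≤ A.rank := by
      by_contra h
      have h0 : A.rank = 0 := by omega
      have he : IsEmpty (Fin A.rank) := by rw [h0]; infer_instance
      rw [Finset.univ_eq_empty, Finset.sum_empty] at hl1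
      exact one_ne_zero hl1.symm
    have hrankN : A.rank ≤ ∏ i, n i := by
      have := Matrix.rank_le_card_width A
      simpa [Fintype.card_pi] using this
    obtain ⟨r0, hr0⟩ : ∃ r0, A.rank = r0 + 1 := ⟨A.rank - 1, by omega⟩
    set l' : Fin (r0+1) → ℝ := fun j => l (Fin.cast hr0.symm j) with hl'
    set B' := fun j => B (Fin.cast hr0.symm j) with hB'
    have hl1' : (∑ j, l' j) = 1 :=
      (Fintype.sum_equiv (finCongr hr0.symm) l' l fun j => rfl).trans hl1
    have hp' : ∀ j i, IsPureDensityMatrix (B' j i) := fun j i => hp _ i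
    have hAeq' : A = ∑ j, l' j • prodMat n (B' j) := by
      rw [hAeq]
      exact (Fintype.sum_equiv (finCongr hr0.symm) (fun j => l' j • prodMat n (B' j))
        (fun j => l j • prodMat n (B j)) fun j => rfl).symm
    obtain ⟨c, hmem⟩ := sum_mem_range n r0 l' B' hl1' hp'
    rw [← hAeq'] at hmem
    exact Set.mem_iUnion.2 ⟨⟨r0, by omega⟩, Set.mem_iUnion.2 ⟨c, hmem⟩⟩
  · refine measure_iUnion_null fun r => measure_iUnion_null fun c => ?_
    refine hausdorffMeasure_of_dimH_lt ?_
    refine lt_of_le_of_lt ((contDiff_Gmap n (r:ℕ) c).dimH_range_le) ?_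
    rw [finrank_Par]
    have hD := dim_lt n hn hN (r:ℕ) (by have := r.2; omega)
    exact_mod_cast hD
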